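/- arXiv:2509.07650 — 2 statements merged into one kernel-verified Lean document; each statement's English description precedes it below -/
import Mathlib

section
/- The Shannon entropy difference of two distributions on a finite alphabet A with total variation distance T = (1/2)||p − q||_1 ≤ 1 − 1/|A| satisfies |H(p) − H(q)| ≤ T·log(|A| − 1) + H_2(T), where H_2 is the binary entropy function (Fannes–Audenaert inequality, classical case). -/
open Finset

/-- Binary entropy function. -/
noncomputable def binEntropy (t : ℝ) : ℝ := -t * Real.log t - (1 - t) * Real.log (1 - t)

private lemma logterm {w r : ℝ} (hw : 0 ≤ w) (hr : 0 ≤ r) (h : 0 < w → 0 < r) :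
    w * (Real.log r - Real.log w) ≤ r - w := by
  rcases hw.eq_or_lt with h0 | h0
  · simp [← h0, hr]
  · have hr' := h h0
    have hlog := Real.log_le_sub_one_of_pos (div_pos hr' h0)
    rw [Real.log_div hr'.ne' h0.ne'] at hlog
    have := mul_le_mul_of_nonneg_left hlog h0.le
    rw [mul_sub, mul_sub, mul_div_cancel₀ _ h0.ne', mul_one] at this
    linarith

/-- Fano-type bound for a coupling `w` of `p` and `q` with diagonal mass `1 - T`. -/
private lemma keyW {A : Type*} [Fintype A] [DecidableEq A] (hA : 2 ≤ Fintype.card A)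
    (p q : A → ℝ) (T : ℝ) (w : A → A → ℝ)
    (hq0 : ∀ b, 0 ≤ q b)
    (hp1 : ∑ a, p a = 1) (hq1 : ∑ b, q b = 1)
    (hw0 : ∀ a b, 0 ≤ w a b)
    (hrow : ∀ a, ∑ b, w a b = p a)
    (hcol : ∀ b, ∑ a, w a b = q b)
    (hdiag : ∑ a, w a a = 1 - T)
    (hT0 : 0 < T) (hT1 : T < 1) :
    (-∑ a, p a * Real.log (p a)) - (-∑ b, q b * Real.log (q b))
      ≤ T * Real.log ((Fintype.card A : ℝ) - 1) + binEntropy T := by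
  set K : ℝ := (Fintype.card A : ℝ) with hKdef
  have hK : (2 : ℝ) ≤ K := by rw [hKdef]; exact_mod_cast hA
  have hK1 : 0 < K - 1 := by linarith
  have h1T : 0 < 1 - T := by linarith
  have hw_total : ∑ a, ∑ b, w a b = 1 := by
    rw [Finset.sum_congr rfl fun a _ => hrow a, hp1]
  -- marginal bounds
  have hw_le_p : ∀ a b, w a b ≤ p a := by
    intro a b
    rw [← hrow a]
    exact Finset.single_le_sum (fun c _ => hw0 a c) (Finset.mem_univ b)
  have hw_le_q : ∀ a b, w a b ≤ q b := by
    intro a b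
    rw [← hcol b]
    exact Finset.single_le_sum (fun c _ => hw0 c b) (Finset.mem_univ a)
  -- Step A : entropy of the first marginal is at most the joint entropy
  have stepA : ∑ a, ∑ b, w a b * Real.log (w a b) ≤ ∑ a, p a * Real.log (p a) := by
    have hrw : ∀ a, p a * Real.log (p a) = ∑ b, w a b * Real.log (p a) := by
      intro a
      rw [← Finset.sum_mul, hrow a]
    rw [Finset.sum_congr rfl fun a _ => hrw a]
    refine Finset.sum_le_sum fun a _ => Finset.sum_le_sum fun b _ => ?_
    rcases (hw0 a b).eq_or_lt with h0 | h0
    · rw [← h0]; simp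
    · exact mul_le_mul_of_nonneg_left (Real.log_le_log h0 (hw_le_p a b)) h0.le
  -- the comparison distribution (Fano)
  set s : A → A → ℝ := fun a b => if a = b then 1 - T else T / (K - 1) with hsdef
  have hs0 : ∀ a b, 0 < s a b := by
    intro a b
    simp only [hsdef]
    split_ifs
    · exact h1T
    · exact div_pos hT0 hK1
  have hs_colsum : ∀ b, ∑ a, s a b = 1 := by
    intro b
    have h1 : ∀ a, s a b = T / (K - 1) + (if a = b then (1 - T) - T / (K - 1) else 0) := by
      intro a
      simp only [hsdef]
      split_ifs <;> ring
    rw [Finset.sum_congr rfl fun a _ => h1 a, Finset.sum_add_distrib,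
      Finset.sum_const, Finset.sum_ite_eq' Finset.univ b
        (fun _ => (1 - T) - T / (K - 1)), if_pos (Finset.mem_univ b),
      Finset.card_univ, nsmul_eq_mul]
    have hfe : (K - 1) * (T / (K - 1)) = T := by field_simp
    have hcast : ((Fintype.card A : ℕ) : ℝ) = K := rfl
    rw [hcast]
    nlinarith [hfe]
  -- rewriting ∑ q log q as a double sum over the coupling
  have hqlog : ∑ b, q b * Real.log (q b) = ∑ a, ∑ b, w a b * Real.log (q b) := by
    rw [Finset.sum_comm]
    refine Finset.sum_congr rfl fun b _ => ?_
    rw [← Finset.sum_mul, hcol b]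
  -- Step B : Gibbs inequality against (a,b) ↦ q b * s a b
  have hB' : ∑ a, ∑ b, w a b * (Real.log (q b) + Real.log (s a b) - Real.log (w a b))
      ≤ ∑ a, ∑ b, (q b * s a b - w a b) := by
    refine Finset.sum_le_sum fun a _ => Finset.sum_le_sum fun b _ => ?_
    rcases (hw0 a b).eq_or_lt with h0 | h0
    · rw [← h0]
      simp only [zero_mul, sub_zero]
      exact mul_nonneg (hq0 b) (hs0 a b).le
    · have hqb : 0 < q b := lt_of_lt_of_le h0 (hw_le_q a b)
      have hr : 0 < q b * s a b := mul_pos hqb (hs0 a b)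
      have hlt := logterm (hw0 a b) hr.le (fun _ => hr)
      rwa [Real.log_mul hqb.ne' (hs0 a b).ne'] at hlt
  have hqs : ∑ a, ∑ b, q b * s a b = 1 := by
    rw [Finset.sum_comm]
    have h1 : ∀ b, ∑ a, q b * s a b = q b := by
      intro b
      rw [← Finset.mul_sum, hs_colsum b, mul_one]
    rw [Finset.sum_congr rfl fun b _ => h1 b, hq1]
  have hRHS0 : ∑ a, ∑ b, (q b * s a b - w a b) = 0 := by
    simp only [Finset.sum_sub_distrib]
    rw [hqs, hw_total, sub_self]
  have expand : ∑ a, ∑ b, w a b * (Real.log (q b) + Real.log (s a b) - Real.log (w a b))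
      = (∑ a, ∑ b, w a b * Real.log (q b)) + (∑ a, ∑ b, w a b * Real.log (s a b))
        - (∑ a, ∑ b, w a b * Real.log (w a b)) := by
    simp only [mul_add, mul_sub, Finset.sum_add_distrib, Finset.sum_sub_distrib]
  -- Step C : computing the cross entropy with s
  have hsplit : ∀ a b, w a b * Real.log (s a b) = w a b * Real.log (T / (K - 1))
      + (if a = b then w a b * (Real.log (1 - T) - Real.log (T / (K - 1))) else 0) := by
    intro a b
    simp only [hsdef]
    split_ifs <;> ring
  have stepC : ∑ a, ∑ b, w a b * Real.log (s a b)
      = Real.log (T / (K - 1)) * T + Real.log (1 - T) * (1 - T) := by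
    have h1 : ∀ a, ∑ b, w a b * Real.log (s a b)
        = p a * Real.log (T / (K - 1)) + w a a * (Real.log (1 - T) - Real.log (T / (K - 1))) := by
      intro a
      rw [Finset.sum_congr rfl fun b _ => hsplit a b, Finset.sum_add_distrib,
        Finset.sum_ite_eq Finset.univ a
          (fun b => w a b * (Real.log (1 - T) - Real.log (T / (K - 1)))),
        if_pos (Finset.mem_univ a), ← Finset.sum_mul, hrow a]
    rw [Finset.sum_congr rfl fun a _ => h1 a, Finset.sum_add_distrib,
      ← Finset.sum_mul, ← Finset.sum_mul, hp1, hdiag]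
    ring
  have hval : -(Real.log (T / (K - 1)) * T + Real.log (1 - T) * (1 - T))
      = T * Real.log (K - 1) + binEntropy T := by
    rw [Real.log_div hT0.ne' hK1.ne']
    simp only [binEntropy]
    ring
  linarith [stepA, hB', hRHS0, expand, hqlog, stepC, hval]

/-- Existence of the maximal coupling. -/
private lemma coupling {A : Type*} [Fintype A] [DecidableEq A]
    (p q : A → ℝ)
    (hp0 : ∀ a, 0 ≤ p a) (hp1 : ∑ a, p a = 1)
    (hq0 : ∀ a, 0 ≤ q a) (hq1 : ∑ a, q a = 1)
    (T : ℝ) (hT : T = (1 / 2) * ∑ a, |p a - q a|) (hT0 : 0 < T) :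
    ∃ w : A → A → ℝ, (∀ a b, 0 ≤ w a b) ∧ (∀ a, ∑ b, w a b = p a)
      ∧ (∀ b, ∑ a, w a b = q b) ∧ ∑ a, w a a = 1 - T := by
  set m : A → ℝ := fun a => min (p a) (q a) with hmdef
  have hm_le_p : ∀ a, m a ≤ p a := fun a => min_le_left _ _
  have hm_le_q : ∀ a, m a ≤ q a := fun a => min_le_right _ _
  have hm_eq : ∀ a, m a = (p a + q a - |p a - q a|) / 2 := by
    intro a
    rcases le_total (p a) (q a) with h | h
    · rw [abs_of_nonpos (by linarith)]
      simp only [hmdef, min_eq_left h]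
      ring
    · rw [abs_of_nonneg (by linarith)]
      simp only [hmdef, min_eq_right h]
      ring
  have hm_sum : ∑ a, m a = 1 - T := by
    rw [Finset.sum_congr rfl fun a _ => hm_eq a]
    have h1 : ∑ a, (p a + q a - |p a - q a|) / 2
        = ((∑ a, p a) + (∑ a, q a) - ∑ a, |p a - q a|) / 2 := by
      rw [← Finset.sum_div, Finset.sum_sub_distrib, Finset.sum_add_distrib]
    rw [h1, hp1, hq1]
    linarith [hT]
  have hu0 : ∀ a, 0 ≤ p a - m a := fun a => by linarith [hm_le_p a]
  have hv0 : ∀ a, 0 ≤ q a - m a := fun a => by linarith [hm_le_q a]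
  have hu_sum : ∑ a, (p a - m a) = T := by
    rw [Finset.sum_sub_distrib, hp1, hm_sum]; ring
  have hv_sum : ∑ a, (q a - m a) = T := by
    rw [Finset.sum_sub_distrib, hq1, hm_sum]; ring
  have huv : ∀ a, (p a - m a) * (q a - m a) = 0 := by
    intro a
    rcases le_total (p a) (q a) with h | h
    · have : p a - m a = 0 := by simp [hmdef, min_eq_left h]
      rw [this, zero_mul]
    · have : q a - m a = 0 := by simp [hmdef, min_eq_right h]
      rw [this, mul_zero]
  refine ⟨fun a b => (if a = b then m a else 0) + (p a - m a) * (q b - m b) / T,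
    ?_, ?_, ?_, ?_⟩
  · intro a b
    refine add_nonneg ?_ (div_nonneg (mul_nonneg (hu0 a) (hv0 b)) hT0.le)
    split_ifs with h
    · exact le_min (hp0 a) (hq0 a)
    · exact le_refl 0
  · intro a
    rw [Finset.sum_add_distrib, Finset.sum_ite_eq Finset.univ a (fun _ => m a),
      if_pos (Finset.mem_univ a)]
    have h1 : ∑ b, (p a - m a) * (q b - m b) / T = (p a - m a) / T * ∑ b, (q b - m b) := by
      rw [Finset.mul_sum]
      exact Finset.sum_congr rfl fun b _ => by ring
    rw [h1, hv_sum, div_mul_cancel₀ _ hT0.ne']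
    ring
  · intro b
    rw [Finset.sum_add_distrib]
    have h0 : ∑ a, (if a = b then m a else 0) = m b := by
      rw [Finset.sum_ite_eq' Finset.univ b (fun a => m a), if_pos (Finset.mem_univ b)]
    have h1 : ∑ a, (p a - m a) * (q b - m b) / T = (q b - m b) / T * ∑ a, (p a - m a) := by
      rw [Finset.mul_sum]
      exact Finset.sum_congr rfl fun a _ => by ring
    rw [h0, h1, hu_sum, div_mul_cancel₀ _ hT0.ne']
    ring
  · have h1 : ∀ a, (if a = a then m a else 0) + (p a - m a) * (q a - m a) / T = m a := by
      intro a
      rw [if_pos rfl, huv a, zero_div, add_zero]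
    rw [Finset.sum_congr rfl fun a _ => h1 a, hm_sum]

/-- Fannes–Audenaert inequality (classical case): for distributions `p, q` on a
finite alphabet with total variation `T = (1/2)‖p - q‖₁ ≤ 1 - 1/|A|`,
`|H(p) - H(q)| ≤ T log(|A| - 1) + H₂(T)`. -/
theorem stmt_12 {A : Type*} [Fintype A] (hA : 2 ≤ Fintype.card A)
    (p q : A → ℝ)
    (hp0 : ∀ a, 0 ≤ p a) (hp1 : ∑ a, p a = 1)
    (hq0 : ∀ a, 0 ≤ q a) (hq1 : ∑ a, q a = 1)
    (T : ℝ) (hT : T = (1 / 2) * ∑ a, |p a - q a|)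
    (hTbound : T ≤ 1 - 1 / (Fintype.card A : ℝ)) :
    |(-∑ a, p a * Real.log (p a)) - (-∑ a, q a * Real.log (q a))|
      ≤ T * Real.log ((Fintype.card A : ℝ) - 1) + binEntropy T := by
  classical
  have hKpos : (0 : ℝ) < (Fintype.card A : ℝ) := by
    have : 0 < Fintype.card A := by omega
    exact_mod_cast this
  have hT0 : 0 ≤ T := by
    rw [hT]
    have : 0 ≤ ∑ a, |p a - q a| := Finset.sum_nonneg fun a _ => abs_nonneg _
    linarith
  rcases hT0.eq_or_lt with h0 | h0
  · -- T = 0 : p = q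
    have hsum0 : ∑ a, |p a - q a| = 0 := by
      rw [hT] at h0
      linarith
    have hpq : ∀ a, p a = q a := by
      intro a
      have h1 := (Finset.sum_eq_zero_iff_of_nonneg
        (fun a (_ : a ∈ Finset.univ) => abs_nonneg (p a - q a))).mp hsum0 a (Finset.mem_univ a)
      have := abs_eq_zero.mp h1
      linarith
    have heq : (-∑ a, p a * Real.log (p a)) = (-∑ a, q a * Real.log (q a)) := by
      congr 1
      exact Finset.sum_congr rfl fun a _ => by rw [hpq a]
    rw [heq, sub_self, abs_zero, ← h0]
    simp [binEntropy]
  · -- T > 0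
    have hT1 : T < 1 := by
      have : 0 < 1 / (Fintype.card A : ℝ) := by positivity
      linarith
    have hT' : T = (1 / 2) * ∑ a, |q a - p a| := by
      rw [hT]
      congr 1
      exact Finset.sum_congr rfl fun a _ => (abs_sub_comm (p a) (q a))
    obtain ⟨w, hw0, hrow, hcol, hdiag⟩ := coupling p q hp0 hp1 hq0 hq1 T hT h0
    obtain ⟨w', hw0', hrow', hcol', hdiag'⟩ := coupling q p hq0 hq1 hp0 hp1 T hT' h0
    rw [abs_sub_le_iff]
    constructor
    · exact keyW hA p q T w hq0 hp1 hq1 hw0 hrow hcol hdiag h0 hT1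
    · exact keyW hA q p T w' hp0 hq1 hp1 hw0' hrow' hcol' hdiag' h0 hT1
end

section
/- The KL divergence between two Boltzmann policies with the same temperature is controlled by the Q-value difference: for β > 0 and Q_1, Q_2 : A → ℝ on a finite set A, D_KL(softmax(βQ_1) || softmax(βQ_2)) ≤ 2β ||Q_1 − Q_2||_∞. -/
open Finset

noncomputable def softmax {A : Type*} [Fintype A] (β : ℝ) (Q : A → ℝ) (a : A) : ℝ :=
  Real.exp (β * Q a) / ∑ a', Real.exp (β * Q a')

/-- KL divergence between two Boltzmann policies with the same temperature is
controlled by the sup-norm of the Q-value difference: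
`D_KL(softmax(βQ₁) ‖ softmax(βQ₂)) ≤ 2β ‖Q₁ - Q₂‖_∞`. -/
theorem stmt_18 {A : Type*} [Fintype A] (hA : (Finset.univ : Finset A).Nonempty)
    (β : ℝ) (hβ : 0 < β) (Q₁ Q₂ : A → ℝ) :
    ∑ a, softmax β Q₁ a * Real.log (softmax β Q₁ a / softmax β Q₂ a)
      ≤ 2 * β * Finset.univ.sup' hA (fun a' => |Q₁ a' - Q₂ a'|) := by
  set M := Finset.univ.sup' hA (fun a' => |Q₁ a' - Q₂ a'|) with hM
  have hMa : ∀ a : A, |Q₁ a - Q₂ a| ≤ M := fun a => by rw [hM]; exact le_sup' (fun a' => |Q₁ a' - Q₂ a'|) (mem_univ a)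
  have hS1 : 0 < ∑ a', Real.exp (β * Q₁ a') :=
    Finset.sum_pos (fun a _ => Real.exp_pos _) hA
  have hS2 : 0 < ∑ a', Real.exp (β * Q₂ a') :=
    Finset.sum_pos (fun a _ => Real.exp_pos _) hA
  have hp1 : ∀ a, 0 ≤ softmax β Q₁ a := fun a =>
    le_of_lt (div_pos (Real.exp_pos _) hS1)
  have hsum : ∑ a, softmax β Q₁ a = 1 := by
    unfold softmax
    rw [← Finset.sum_div, div_self (ne_of_gt hS1)]
  have hlogS : Real.log (∑ a', Real.exp (β * Q₂ a'))
      - Real.log (∑ a', Real.exp (β * Q₁ a')) ≤ β * M := by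
    have hle : (∑ a', Real.exp (β * Q₂ a'))
        ≤ Real.exp (β * M) * ∑ a', Real.exp (β * Q₁ a') := by
      rw [Finset.mul_sum]
      apply Finset.sum_le_sum
      intro a _
      rw [← Real.exp_add, Real.exp_le_exp]
      have : Q₂ a - Q₁ a ≤ M := by
        have := hMa a; rw [abs_sub_comm] at this
        exact le_trans (le_abs_self _) this
      nlinarith
    have := Real.log_le_log hS2 hle
    rw [Real.log_mul (Real.exp_ne_zero _) (ne_of_gt hS1), Real.log_exp] at this
    linarith
  have hlog : ∀ a, Real.log (softmax β Q₁ a / softmax β Q₂ a) ≤ 2 * β * M := by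
    intro a
    unfold softmax
    rw [Real.log_div (ne_of_gt (div_pos (Real.exp_pos _) hS1))
        (ne_of_gt (div_pos (Real.exp_pos _) hS2)),
      Real.log_div (Real.exp_ne_zero _) (ne_of_gt hS1),
      Real.log_div (Real.exp_ne_zero _) (ne_of_gt hS2),
      Real.log_exp, Real.log_exp]
    have h1 : Q₁ a - Q₂ a ≤ M := le_trans (le_abs_self _) (hMa a)
    nlinarith
  calc ∑ a, softmax β Q₁ a * Real.log (softmax β Q₁ a / softmax β Q₂ a)
      ≤ ∑ a, softmax β Q₁ a * (2 * β * M) :=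
        Finset.sum_le_sum fun a _ => mul_le_mul_of_nonneg_left (hlog a) (hp1 a)
    _ = 2 * β * M := by rw [← Finset.sum_mul, hsum, one_mul]
end
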